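/- arXiv:0807.0995 — 3 statements merged into one kernel-verified Lean document; each statement's English description precedes it below -/
import Mathlib

section
/- Let G be a countable group acting by measure-class-preserving transformations on a standard probability space (X,m), and suppose there exists a measurable map π : X → X that is constant on G-orbits and satisfies π(x) ∈ Gx for a.e. x. Then the union of the free orbits of the action admits a wandering set whose G-translates cover it: i.e., the restriction of the action to the union of free orbits is completely dissipative. -/
open MeasureTheory Pointwise

/-- If a measure-class-preserving action of a countable group admits a measurable
orbit selection `π` (constant on orbits, with `π x` in the orbit of `x` a.e.), then
the restriction of the action to the union of free orbits is completely dissipative: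
there is a wandering set whose translates cover the union of free orbits mod 0. -/
theorem stmt_3 {G X : Type*} [Group G] [Countable G] [MeasurableSpace X]
    [StandardBorelSpace X] [MulAction G X]
    (μ : Measure X) [IsProbabilityMeasure μ]
    (hmeas : ∀ g : G, Measurable (fun x : X => g • x))
    (hqi : ∀ g : G, μ.map (fun x : X => g • x) ≪ μ ∧ μ ≪ μ.map (fun x : X => g • x))
    (π : X → X) (hπ : Measurable π)
    (hconst : ∀ g : G, ∀ᵐ x ∂μ, π (g • x) = π x)
    (hsel : ∀ᵐ x ∂μ, π x ∈ MulAction.orbit G x) :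
    ∃ W : Set X, MeasurableSet W ∧
      W ⊆ {x : X | ∀ g : G, g • x = x → g = 1} ∧
      (∀ g h : G, g ≠ h → μ ((g • W) ∩ (h • W)) = 0) ∧
      μ ({x : X | ∀ g : G, g • x = x → g = 1} \ ⋃ g : G, g • W) = 0 := by
  classical
  letI := upgradeStandardBorel X
  -- measurability of equality sets
  have hEq : ∀ (f h : X → X), Measurable f → Measurable h →
      MeasurableSet {x : X | f x = h x} := by
    intro f h hf hh
    have : {x : X | f x = h x} = (fun x => (f x, h x)) ⁻¹' (Set.diagonal X) := by
      ext x; simp [Set.diagonal]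
    rw [this]
    exact (hf.prodMk hh) (isClosed_diagonal.measurableSet)
  -- the free part
  set F : Set X := {x : X | ∀ g : G, g • x = x → g = 1} with hF
  have hFmeas : MeasurableSet F := by
    have : F = ⋂ g ∈ {g : G | g ≠ 1}, {x : X | g • x ≠ x} := by
      ext x
      simp only [Set.mem_iInter, Set.mem_setOf_eq, hF]
      constructor
      · intro hx g hg hgx; exact hg (hx g hgx)
      · intro hx g hgx; by_contra hg; exact hx g hg hgx
    rw [this]
    exact MeasurableSet.biInter (Set.to_countable _) fun g _ =>
      (hEq _ _ (hmeas g) measurable_id).compl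
  -- the good invariant conull set
  set A : Set X := {x : X | π x ∈ MulAction.orbit G x} ∩ ⋂ g : G, {x : X | π (g • x) = π x}
    with hA
  have hAmeas : MeasurableSet A := by
    apply MeasurableSet.inter
    · have : {x : X | π x ∈ MulAction.orbit G x} = ⋃ g : G, {x : X | π x = g • x} := by
        ext x; simp [MulAction.orbit, eq_comm]
      rw [this]
      exact MeasurableSet.iUnion fun g => hEq _ _ hπ (hmeas g)
    · exact MeasurableSet.iInter fun g => hEq _ _ (hπ.comp (hmeas g)) hπ
  have hAconull : μ Aᶜ = 0 := by
    have h1 : ∀ᵐ x ∂μ, x ∈ A := by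
      rw [hA]
      filter_upwards [hsel, (ae_all_iff.2 hconst)] with x h1 h2
      exact ⟨h1, Set.mem_iInter.2 fun g => h2 g⟩
    exact h1
  -- invariance of A
  have hAinv : ∀ (g : G) (x : X), x ∈ A → g • x ∈ A := by
    intro g x hx
    obtain ⟨hx1, hx2⟩ := hx
    have hx2' : ∀ h : G, π (h • x) = π x := fun h => Set.mem_iInter.1 hx2 h
    constructor
    · show π (g • x) ∈ MulAction.orbit G (g • x)
      rw [hx2' g]
      obtain ⟨h, hh⟩ := hx1
      exact ⟨h * g⁻¹, by simp [mul_smul, ← hh]⟩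
    · refine Set.mem_iInter.2 fun h => ?_
      show π (h • g • x) = π (g • x)
      rw [← mul_smul, hx2' (h * g), hx2' g]
  -- invariance of F
  have hFinv : ∀ (g : G) (x : X), x ∈ F → g • x ∈ F := by
    intro g x hx h hh
    have : (g⁻¹ * h * g) • x = x := by
      rw [mul_smul, mul_smul, hh, inv_smul_smul]
    have := hx _ this
    have := congrArg (fun k => g * k * g⁻¹) this
    simpa [mul_assoc] using this
  -- the wandering set
  refine ⟨A ∩ F ∩ {x : X | π x = x}, (hAmeas.inter hFmeas).inter (hEq _ _ hπ measurable_id),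
    fun x hx => hx.1.2, ?_, ?_⟩
  · intro g h hgh
    have : (g • (A ∩ F ∩ {x : X | π x = x})) ∩ (h • (A ∩ F ∩ {x : X | π x = x})) = ∅ := by
      ext y
      simp only [Set.mem_inter_iff, Set.mem_empty_iff_false, iff_false, not_and]
      rintro ⟨w, ⟨⟨hwA, hwF⟩, hwπ⟩, rfl⟩ ⟨w', ⟨⟨hwA', hwF'⟩, hwπ'⟩, heq⟩
      have heq' : h • w' = g • w := heq
      have hw : ∀ k : G, π (k • w) = π w := fun k => Set.mem_iInter.1 hwA.2 k
      have hw' : ∀ k : G, π (k • w') = π w' := fun k => Set.mem_iInter.1 hwA'.2 k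
      have h1 : π (g • w) = w := by rw [hw g]; exact hwπ
      have h2 : π (h • w') = w' := by rw [hw' h]; exact hwπ'
      have hww' : w = w' := by rw [← h1, ← heq']; exact h2
      subst hww'
      have : (h⁻¹ * g) • w = w := by rw [mul_smul, ← heq', inv_smul_smul]
      have := hwF _ this
      exact hgh (by rwa [inv_mul_eq_one, eq_comm] at this)
    rw [this]; simp
  · refine measure_mono_null ?_ hAconull
    intro x hx
    simp only [Set.mem_diff, Set.mem_iUnion] at hx
    obtain ⟨hxF, hxU⟩ := hx
    by_contra hxA
    simp only [Set.mem_compl_iff, not_not] at hxA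
    obtain ⟨g, hg⟩ := hxA.1
    have hπx : π x = g • x := hg.symm
    apply hxU
    refine ⟨g⁻¹, ?_⟩
    refine ⟨π x, ⟨⟨?_, ?_⟩, ?_⟩, ?_⟩
    · rw [hπx]; exact hAinv g x hxA
    · rw [hπx]; exact hFinv g x hxF
    · show π (π x) = π x
      have hc : π (g • x) = π x := Set.mem_iInter.1 hxA.2 g
      exact (congrArg π hπx).trans hc
    · show g⁻¹ • π x = x
      rw [hπx, inv_smul_smul]
end

section
/- Let G be a countable group with a free measure-class-preserving action on a standard probability space (X,m). Then (mod 0) the dissipative part of the action is contained in the set {x ∈ X : Σ_{g∈G} d(gm)/dm(x) < ∞}; equivalently, on the set where the orbitwise sum of Radon–Nikodym derivatives diverges, every positive-measure subset is recurrent. -/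
open MeasureTheory
open Function
open scoped ENNReal Pointwise

/-!
The points of `A` whose orbit never returns to `A` form a wandering set `W`, so the translates
`g • W` are pairwise disjoint. Since `μ (g • W) = ∫⁻ x in W, r g⁻¹ x ∂μ`, summing over `G` gives
`∫⁻ x in W, ∑' g, r g x ∂μ ≤ μ univ < ∞`; as the integrand is `∞` on `W ⊆ A`, `μ W = 0`.
-/

section Wandering

variable {G X : Type*} [Group G] [MulAction G X]

variable (G) in
def IsWanderingSet (W : Set X) : Prop :=
  ∀ g : G, g ≠ 1 → Disjoint (g • W) W

variable (G) in
def nonRecurrentPart (A : Set X) : Set X :=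
  {x | x ∈ A ∧ ∀ g : G, g ≠ 1 → g • x ∉ A}

theorem IsWanderingSet.pairwise_disjoint_smul {W : Set X} (hW : IsWanderingSet G W) :
    Pairwise (Disjoint on fun g : G => g • W) := by
  intro g h hgh
  have hne : h⁻¹ * g ≠ 1 := fun h1 => hgh (inv_mul_eq_one.mp h1).symm
  have := (Set.disjoint_smul_set (a := h)).mpr (hW _ hne)
  rwa [smul_smul, mul_inv_cancel_left] at this

theorem isWanderingSet_nonRecurrentPart (A : Set X) :
    IsWanderingSet G (nonRecurrentPart G A) := by
  intro g hg
  rw [Set.disjoint_left]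
  rintro _ ⟨x, hx, rfl⟩ hgx
  exact hx.2 g hg hgx.1

theorem measurableSet_nonRecurrentPart [Countable G] [MeasurableSpace X]
    (hmeas : ∀ g : G, Measurable (fun x : X => g • x)) {A : Set X} (hA : MeasurableSet A) :
    MeasurableSet (nonRecurrentPart G A) := by
  have : nonRecurrentPart G A = A ∩ ⋂ (g : G) (_ : g ≠ 1), (fun x => g • x) ⁻¹' Aᶜ := by
    ext x
    simp [nonRecurrentPart]
  rw [this]
  exact hA.inter <| .iInter fun g => .iInter fun _ => hmeas g hA.compl

end Wandering

section RadonNikodym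

variable {G X : Type*} [Group G] [MulAction G X] [MeasurableSpace X] {μ : Measure X}
  {r : G → X → ℝ≥0∞}

theorem measure_smul_eq_setLIntegral (hmeas : ∀ g : G, Measurable (fun x : X => g • x))
    (hrn : ∀ g : G, μ.map (fun x : X => g • x) = μ.withDensity (r g))
    (g : G) {W : Set X} (hW : MeasurableSet W) :
    μ (g • W) = ∫⁻ x in W, r g⁻¹ x ∂μ := by
  rw [← Set.preimage_smul_inv, ← Measure.map_apply (hmeas g⁻¹) hW, hrn, withDensity_apply _ hW]

theorem measure_eq_zero_of_isWanderingSet [Countable G] [IsFiniteMeasure μ]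
    (hmeas : ∀ g : G, Measurable (fun x : X => g • x)) (hr : ∀ g : G, Measurable (r g))
    (hrn : ∀ g : G, μ.map (fun x : X => g • x) = μ.withDensity (r g))
    {W : Set X} (hW : MeasurableSet W) (hwand : IsWanderingSet G W)
    (hdiv : W ⊆ {x : X | (∑' g : G, r g x) = ⊤}) :
    μ W = 0 := by
  have hsmul : ∀ g : G, MeasurableSet (g • W) := fun g => by
    rw [← Set.preimage_smul_inv]; exact hmeas g⁻¹ hW
  have hsum : ∫⁻ x in W, ∑' g : G, r g x ∂μ = ∑' g : G, μ (g • W) := by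
    simp_rw [measure_smul_eq_setLIntegral hmeas hrn _ hW,
      ← (Equiv.inv G).tsum_eq (fun g => r g _)]
    exact lintegral_tsum fun g => (hr g⁻¹).aemeasurable.restrict
  have hfin : ∫⁻ x in W, ∑' g : G, r g x ∂μ ≠ ⊤ := by
    rw [hsum, ← measure_iUnion hwand.pairwise_disjoint_smul hsmul]
    exact measure_ne_top μ _
  rw [setLIntegral_congr_fun hW (fun x hx => hdiv hx), setLIntegral_const] at hfin
  by_contra h0
  exact hfin (ENNReal.top_mul h0)

end RadonNikodym

theorem stmt_5_general {G X : Type*} [Group G] [Countable G] [MeasurableSpace X]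
    [MulAction G X]
    (μ : Measure X) [IsProbabilityMeasure μ]
    (hmeas : ∀ g : G, Measurable (fun x : X => g • x))
    (r : G → X → ℝ≥0∞) (hr : ∀ g : G, Measurable (r g))
    (hrn : ∀ g : G, μ.map (fun x : X => g • x) = μ.withDensity (r g))
    (A : Set X) (hA : MeasurableSet A)
    (hAdiv : A ⊆ {x : X | (∑' g : G, r g x) = ⊤}) :
    ∀ᵐ x ∂μ, x ∈ A → ∃ g : G, g ≠ 1 ∧ g • x ∈ A := by
  have hW : μ (nonRecurrentPart G A) = 0 :=
    measure_eq_zero_of_isWanderingSet hmeas hr hrn (measurableSet_nonRecurrentPart hmeas hA)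
      (isWanderingSet_nonRecurrentPart A) fun x hx => hAdiv hx.1
  filter_upwards [measure_eq_zero_iff_ae_notMem.mp hW] with x hx hxA
  by_contra! hcon
  exact hx ⟨hxA, hcon⟩

/-- For a free measure-class-preserving action of a countable group, on the set where
the orbitwise sum of Radon–Nikodym derivatives diverges, every positive-measure
subset is recurrent (equivalently, the dissipative part is contained mod 0 in the
set where the sum is finite). -/
theorem stmt_5 {G X : Type*} [Group G] [Countable G] [MeasurableSpace X]
    [StandardBorelSpace X] [MulAction G X]
    (μ : Measure X) [IsProbabilityMeasure μ]
    (hmeas : ∀ g : G, Measurable (fun x : X => g • x))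
    (hfree : ∀ᵐ x ∂μ, ∀ g : G, g • x = x → g = 1)
    (r : G → X → ℝ≥0∞) (hr : ∀ g : G, Measurable (r g))
    (hrn : ∀ g : G, μ.map (fun x : X => g • x) = μ.withDensity (r g))
    (A : Set X) (hA : MeasurableSet A)
    (hAdiv : A ⊆ {x : X | (∑' g : G, r g x) = ⊤})
    (hpos : 0 < μ A) :
    ∀ᵐ x ∂μ, x ∈ A → ∃ g : G, g ≠ 1 ∧ g • x ∈ A :=
  stmt_5_general μ hmeas r hr hrn A hA hAdiv
end

section
/- Let G be a countable group acting by measure-class-preserving transformations on a standard probability space (X,m), and let A be a G-invariant measurable set such that there exists a measurable map π : A → A constant on G-orbits with π(x) ∈ Gx a.e. Then a.e. ergodic component of the action contained in A is purely atomic; equivalently, a.e. orbit in A carries a finite orbit measure μ_x with μ_x(gx) = d(g^{-1}m)/dm(x) and Σ_{g∈G} μ_x(gx)/|Stab| < ∞ when the action is free. -/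
open MeasureTheory
open scoped ENNReal

/-
For a free action, the Radon–Nikodym derivatives `r g = d(g_* μ)/dμ` satisfy
`∫⁻ x in C, r g x ∂μ = μ (g⁻¹ C)`. If `C` is a measurable cross-section meeting each orbit at most
once, the translates `g⁻¹ C` are disjoint, so `∫⁻ x in C, ∑' g, r g x ∂μ ≤ μ univ` and the orbit sum
is finite a.e. on `C`. The selection `π` sends a.e. point of `A` into such a cross-section,
`C = {x | ∀ g, π (g • x) = x}`, and the cocycle identity `r (a * b) x = r a x * r b (a⁻¹ • x)`
shows that the orbit sum at `x` is a finite multiple of the orbit sum at `π x`.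
-/

lemma MeasureTheory.Measure.map_withDensity_comp {α β : Type*} [MeasurableSpace α]
    [MeasurableSpace β] {ν : Measure α} {f : α → β} {g : β → ℝ≥0∞} (hf : Measurable f)
    (hg : Measurable g) : (ν.withDensity (g ∘ f)).map f = (ν.map f).withDensity g := by
  ext s hs
  rw [Measure.map_apply hf hs, withDensity_apply _ (hf hs), withDensity_apply _ hs,
    setLIntegral_map hs hg hf]
  rfl

section RadonNikodymCocycle

variable {G X : Type*} [Group G] [MulAction G X] [MeasurableSpace X] {μ : Measure X}
  {r : G → X → ℝ≥0∞}

lemma quasiMeasurePreserving_smul_of_map_eq_withDensity {g : G}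
    (hmeas : Measurable (fun x : X => g • x))
    (hrn : μ.map (fun x : X => g • x) = μ.withDensity (r g)) :
    Measure.QuasiMeasurePreserving (fun x : X => g • x) μ μ :=
  ⟨hmeas, hrn ▸ withDensity_absolutelyContinuous μ (r g)⟩

lemma measure_preimage_smul_eq_setLIntegral {g : G} (hmeas : Measurable (fun x : X => g • x))
    (hrn : μ.map (fun x : X => g • x) = μ.withDensity (r g)) {E : Set X} (hE : MeasurableSet E) :
    μ ((fun x : X => g • x) ⁻¹' E) = ∫⁻ x in E, r g x ∂μ := by
  rw [← Measure.map_apply hmeas hE, hrn, withDensity_apply _ hE]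

lemma ae_lt_top_of_map_smul_eq_withDensity [IsFiniteMeasure μ] {g : G}
    (hmeas : Measurable (fun x : X => g • x)) (hr : Measurable (r g))
    (hrn : μ.map (fun x : X => g • x) = μ.withDensity (r g)) : ∀ᵐ x ∂μ, r g x < ∞ := by
  refine ae_lt_top hr ?_
  rw [← setLIntegral_univ, ← measure_preimage_smul_eq_setLIntegral hmeas hrn MeasurableSet.univ]
  exact measure_ne_top _ _

lemma ae_cocycle_of_map_smul_eq_withDensity [IsFiniteMeasure μ]
    (hmeas : ∀ g : G, Measurable (fun x : X => g • x))
    (hr : ∀ g : G, Measurable (r g))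
    (hrn : ∀ g : G, μ.map (fun x : X => g • x) = μ.withDensity (r g)) (a b : G) :
    ∀ᵐ x ∂μ, r (a * b) x = r a x * r b (a⁻¹ • x) := by
  have hrb : Measurable fun x : X => r b (a⁻¹ • x) := (hr b).comp (hmeas a⁻¹)
  have hmap : μ.withDensity (r (a * b)) = μ.withDensity (r a * fun x => r b (a⁻¹ • x)) := by
    have hcomp : (fun x : X => (a * b) • x) = (fun x => a • x) ∘ fun x => b • x := by
      funext x; exact mul_smul a b x
    have hrb_comp : μ.withDensity (r b) =
        μ.withDensity ((fun x => r b (a⁻¹ • x)) ∘ fun x : X => a • x) := by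
      congr 1; funext x; simp
    rw [← hrn, hcomp, ← Measure.map_map (hmeas a) (hmeas b), hrn b, hrb_comp,
      Measure.map_withDensity_comp (hmeas a) hrb, hrn a, ← withDensity_mul μ (hr a) hrb]
  exact (withDensity_eq_iff_of_sigmaFinite (hr _).aemeasurable
    ((hr a).mul hrb).aemeasurable).mp hmap

omit [MeasurableSpace X] in
lemma tsum_eq_mul_tsum_smul {x : X} (hcoc : ∀ a b : G, r (a * b) x = r a x * r b (a⁻¹ • x))
    (h : G) : ∑' g, r g x = r h⁻¹ x * ∑' g, r g (h • x) := by
  calc ∑' g, r g x = ∑' g, r (h⁻¹ * (h * g)) x := by simp only [inv_mul_cancel_left]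
    _ = ∑' g, r h⁻¹ x * r (h * g) (h • x) := by simp only [hcoc, inv_inv]
    _ = r h⁻¹ x * ∑' g, r g (h • x) := by
      rw [ENNReal.tsum_mul_left]
      exact congrArg _ ((Equiv.mulLeft h).tsum_eq fun g => r g (h • x))

end RadonNikodymCocycle

section CrossSection

variable (G : Type*) {X : Type*} [Group G] [MulAction G X]

def crossSection (π : X → X) : Set X := {x | ∀ g : G, π (g • x) = x}

variable {G} {π : X → X}

lemma measurableSet_crossSection [Countable G] [MeasurableSpace X] [MeasurableEq X]
    (hmeas : ∀ g : G, Measurable (fun x : X => g • x)) (hπ : Measurable π) :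
    MeasurableSet (crossSection G π) := by
  rw [crossSection, Set.ofPred_forall]
  exact MeasurableSet.iInter fun g => measurableSet_eq_fun (hπ.comp (hmeas g)) measurable_id

lemma smul_eq_smul_of_smul_mem_crossSection {x : X} {g g' : G}
    (hg : g • x ∈ crossSection G π) (hg' : g' • x ∈ crossSection G π) : g • x = g' • x := by
  have h := hg (g' * g⁻¹)
  have h' := hg' 1
  rw [mul_smul, inv_smul_smul] at h
  rw [one_smul] at h'
  exact h.symm.trans h'

lemma mem_crossSection_of_mem_orbit {x : X} (hconst : ∀ g : G, π (g • x) = π x)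
    (hsel : π x ∈ MulAction.orbit G x) : π x ∈ crossSection G π := by
  obtain ⟨h, hh : h • x = π x⟩ := hsel
  intro g
  have hgh := hconst (g * h)
  rwa [mul_smul, hh] at hgh

lemma aedisjoint_preimage_smul_crossSection [MeasurableSpace X] {μ : Measure X}
    (hfree : ∀ᵐ x ∂μ, ∀ g : G, g • x = x → g = 1) :
    Pairwise (Function.onFun (AEDisjoint μ)
      fun g : G => (fun x : X => g • x) ⁻¹' crossSection G π) := by
  intro g g' hne
  refine measure_eq_zero_iff_ae_notMem.2 (hfree.mono fun x hx ⟨hg, hg'⟩ => hne ?_)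
  have hfix : (g'⁻¹ * g) • x = x := by
    rw [mul_smul, smul_eq_smul_of_smul_mem_crossSection hg hg', inv_smul_smul]
  exact inv_mul_eq_one.mp (hx _ hfix) |>.symm

end CrossSection

section OrbitSum

variable {G X : Type*} [Group G] [Countable G] [MulAction G X] [MeasurableSpace X]
  {μ : Measure X} {r : G → X → ℝ≥0∞}

lemma setLIntegral_tsum_le_measure_univ {C : Set X} (hC : MeasurableSet C)
    (hmeas : ∀ g : G, Measurable (fun x : X => g • x)) (hr : ∀ g : G, Measurable (r g))
    (hrn : ∀ g : G, μ.map (fun x : X => g • x) = μ.withDensity (r g))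
    (hdisj : Pairwise (Function.onFun (AEDisjoint μ) fun g : G => (fun x : X => g • x) ⁻¹' C)) :
    ∫⁻ x in C, ∑' g, r g x ∂μ ≤ μ Set.univ :=
  calc ∫⁻ x in C, ∑' g, r g x ∂μ
      = ∑' g, μ ((fun x : X => g • x) ⁻¹' C) := by
        rw [lintegral_tsum fun g => (hr g).aemeasurable]
        exact tsum_congr fun g => (measure_preimage_smul_eq_setLIntegral (hmeas g) (hrn g) hC).symm
    _ ≤ μ (⋃ g, (fun x : X => g • x) ⁻¹' C) :=
        tsum_meas_le_meas_iUnion_of_disjoint₀ μ (fun g => ((hmeas g) hC).nullMeasurableSet) hdisj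
    _ ≤ μ Set.univ := measure_mono (Set.subset_univ _)

lemma ae_tsum_ne_top_of_mem_crossSection [IsFiniteMeasure μ] [MeasurableEq X] {π : X → X}
    (hπ : Measurable π) (hmeas : ∀ g : G, Measurable (fun x : X => g • x))
    (hfree : ∀ᵐ x ∂μ, ∀ g : G, g • x = x → g = 1) (hr : ∀ g : G, Measurable (r g))
    (hrn : ∀ g : G, μ.map (fun x : X => g • x) = μ.withDensity (r g)) :
    ∀ᵐ x ∂μ, x ∈ crossSection G π → ∑' g, r g x ≠ ∞ := by
  have hC := measurableSet_crossSection hmeas hπ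
  have hint := setLIntegral_tsum_le_measure_univ hC hmeas hr hrn
    (aedisjoint_preimage_smul_crossSection hfree)
  rw [← ae_restrict_iff' hC]
  exact (ae_lt_top (Measurable.tsum hr) (ne_top_of_le_ne_top (measure_ne_top μ _) hint)).mono
    fun x hx => hx.ne

end OrbitSum

theorem stmt_13_general {G X : Type*} [Group G] [Countable G] [MeasurableSpace X]
    [StandardBorelSpace X] [MulAction G X]
    (μ : Measure X) [IsProbabilityMeasure μ]
    (hmeas : ∀ g : G, Measurable (fun x : X => g • x))
    (hfree : ∀ᵐ x ∂μ, ∀ g : G, g • x = x → g = 1)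
    (r : G → X → ℝ≥0∞) (hr : ∀ g : G, Measurable (r g))
    (hrn : ∀ g : G, μ.map (fun x : X => g • x) = μ.withDensity (r g))
    (A : Set X)
    (π : X → X) (hπ : Measurable π)
    (hconst : ∀ g : G, ∀ᵐ x ∂μ, x ∈ A → π (g • x) = π x)
    (hsel : ∀ᵐ x ∂μ, x ∈ A → π x ∈ MulAction.orbit G x) :
    ∀ᵐ x ∂μ, x ∈ A → (∑' g : G, r g x) ≠ ⊤ := by
  have hsection : ∀ᵐ x ∂μ, ∀ h : G, h • x ∈ crossSection G π → ∑' g, r g (h • x) ≠ ∞ :=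
    ae_all_iff.2 fun h => (quasiMeasurePreserving_smul_of_map_eq_withDensity (hmeas h) (hrn h)).ae
      (ae_tsum_ne_top_of_mem_crossSection hπ hmeas hfree hr hrn)
  have hcoc : ∀ᵐ x ∂μ, ∀ a b : G, r (a * b) x = r a x * r b (a⁻¹ • x) :=
    ae_all_iff.2 fun a => ae_all_iff.2 (ae_cocycle_of_map_smul_eq_withDensity hmeas hr hrn a)
  have hfin : ∀ᵐ x ∂μ, ∀ g : G, r g x < ∞ :=
    ae_all_iff.2 fun g => ae_lt_top_of_map_smul_eq_withDensity (hmeas g) (hr g) (hrn g)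
  filter_upwards [ae_all_iff.2 hconst, hsel, hsection, hcoc, hfin]
    with x hconstx hselx hsectionx hcocx hfinx hxA
  obtain ⟨h, hh : h • x = π x⟩ := hselx hxA
  have hπx : h • x ∈ crossSection G π :=
    hh ▸ mem_crossSection_of_mem_orbit (fun g => hconstx g hxA) ⟨h, hh⟩
  rw [tsum_eq_mul_tsum_smul hcocx h]
  exact ENNReal.mul_ne_top (hfinx h⁻¹).ne (hsectionx h hπx)

/-- If a `G`-invariant set `A` admits a measurable orbit selection, then (for a free
measure-class-preserving action) a.e. ergodic component in `A` is purely atomic; in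
particular, for a.e. `x ∈ A` the orbitwise sum of the Radon–Nikodym derivatives is
finite. -/
theorem stmt_13 {G X : Type*} [Group G] [Countable G] [MeasurableSpace X]
    [StandardBorelSpace X] [MulAction G X]
    (μ : Measure X) [IsProbabilityMeasure μ]
    (hmeas : ∀ g : G, Measurable (fun x : X => g • x))
    (hfree : ∀ᵐ x ∂μ, ∀ g : G, g • x = x → g = 1)
    (r : G → X → ℝ≥0∞) (hr : ∀ g : G, Measurable (r g))
    (hrn : ∀ g : G, μ.map (fun x : X => g • x) = μ.withDensity (r g))
    (A : Set X) (hA : MeasurableSet A)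
    (hAinv : ∀ g : G, (fun x : X => g • x) '' A = A)
    (π : X → X) (hπ : Measurable π)
    (hconst : ∀ g : G, ∀ᵐ x ∂μ, x ∈ A → π (g • x) = π x)
    (hsel : ∀ᵐ x ∂μ, x ∈ A → π x ∈ MulAction.orbit G x) :
    ∀ᵐ x ∂μ, x ∈ A → (∑' g : G, r g x) ≠ ⊤ :=
  stmt_13_general μ hmeas hfree r hr hrn A π hπ hconst hsel
end
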